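/- Let G be a group with a length function ℓ, and let P be a real polynomial such that for every r ≥ 0 and every nonnegative f ∈ ℂG whose support is contained in B_ℓ(e,r), one has ‖f‖_{*,G} ≤ P(r)·‖f‖₂. Then for every subgroup H of G, the restriction of ℓ to H is a length function on H and for every r ≥ 0 and every nonnegative f ∈ ℂH supported in {h ∈ H : ℓ(h) ≤ r}, one has ‖f‖_{*,H} ≤ P(r)·‖f‖₂; that is, the same polynomial bound holds for H with the induced length. -/

import Mathlib

open scoped BigOperators ComplexOrder

/-- The ℓ²-norm of a finitely supported function `f : G → ℂ`. -/
noncomputable def l2norm {G : Type*} [Group G] (f : MonoidAlgebra ℂ G) : ℝ :=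
  Real.sqrt (∑ γ ∈ f.coeff.support, ‖f.coeff γ‖ ^ 2)

/-- The operator norm of left convolution by `f` on `ℓ²(G)`. -/
noncomputable def opNorm {G : Type*} [Group G] (f : MonoidAlgebra ℂ G) : ℝ :=
  sSup {c : ℝ | ∃ g : MonoidAlgebra ℂ G, l2norm g = 1 ∧ c = l2norm (f * g)}

/-- The weighted ℓ²-norm `‖f‖_{ℓ,s}`. -/
noncomputable def sobolevNorm {G : Type*} [Group G] (ℓ : G → ℝ) (s : ℝ)
    (f : MonoidAlgebra ℂ G) : ℝ :=
  Real.sqrt (∑ γ ∈ f.coeff.support, ‖f.coeff γ‖ ^ 2 * (1 + ℓ γ) ^ (2 * s))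

/-- `ℓ` is a length function on the group `G`. -/
def IsLengthFunction {G : Type*} [Group G] (ℓ : G → ℝ) : Prop :=
  ℓ 1 = 0 ∧ (∀ γ, 0 ≤ ℓ γ) ∧ (∀ γ : G, ℓ γ⁻¹ = ℓ γ) ∧ ∀ γ μ : G, ℓ (γ * μ) ≤ ℓ γ + ℓ μ

/-- `G` has property RD with respect to the length function `ℓ`. -/
def PropertyRD {G : Type*} [Group G] (ℓ : G → ℝ) : Prop :=
  ∃ C s : ℝ, 0 < C ∧ 0 < s ∧ ∀ f : MonoidAlgebra ℂ G, opNorm f ≤ C * sobolevNorm ℓ s f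

/-!
Extension by zero `ℂH → ℂG` is an injective algebra map that preserves ℓ²-norms, nonnegativity
and supports, so every test vector for `‖f‖_{*,H}` is one for `‖f‖_{*,G}` and
`‖f‖_{*,H} ≤ ‖f‖_{*,G} ≤ P(r)‖f‖₂`. Since `opNorm` is a real `sSup`, the first inequality also
needs the set defining `‖·‖_{*,G}` to be bounded; this is `‖f * g‖₂ ≤ ‖f‖₁ ‖g‖₂`.
-/

section L2Norm

variable {G : Type*}

noncomputable def coeffOn (s : Finset G) : MonoidAlgebra ℂ G →+ EuclideanSpace ℂ s where
  toFun f := WithLp.toLp 2 fun γ => f.coeff γ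
  map_zero' := rfl
  map_add' _ _ := rfl

variable [Group G]

lemma l2norm_eq_sqrt_sum_of_support_subset {f : MonoidAlgebra ℂ G} {s : Finset G}
    (hs : f.coeff.support ⊆ s) : l2norm f = √(∑ γ ∈ s, ‖f.coeff γ‖ ^ 2) :=
  congrArg Real.sqrt <| Finset.sum_subset hs fun γ _ hγ => by
    simp [Finsupp.notMem_support_iff.mp hγ]

lemma l2norm_eq_norm_coeffOn {f : MonoidAlgebra ℂ G} {s : Finset G}
    (hs : f.coeff.support ⊆ s) : l2norm f = ‖coeffOn s f‖ := by
  rw [l2norm_eq_sqrt_sum_of_support_subset hs, EuclideanSpace.norm_eq, ← Finset.sum_coe_sort s]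
  rfl

lemma l2norm_nonneg (f : MonoidAlgebra ℂ G) : 0 ≤ l2norm f := Real.sqrt_nonneg _

lemma l2norm_sum_le {ι : Type*} (t : Finset ι) (F : ι → MonoidAlgebra ℂ G) :
    l2norm (∑ i ∈ t, F i) ≤ ∑ i ∈ t, l2norm (F i) := by
  classical
  set s := t.biUnion fun i => (F i).coeff.support
  have hF : ∀ i ∈ t, l2norm (F i) = ‖coeffOn s (F i)‖ := fun i hi =>
    l2norm_eq_norm_coeffOn fun γ hγ => Finset.mem_biUnion.mpr ⟨i, hi, hγ⟩
  have hsum : (∑ i ∈ t, F i).coeff.support ⊆ s := by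
    rw [MonoidAlgebra.coeff_sum]
    exact Finsupp.support_finsetSum
  rw [l2norm_eq_norm_coeffOn hsum, map_sum, Finset.sum_congr rfl hF]
  exact norm_sum_le t _

lemma l2norm_single_mul (γ : G) (c : ℂ) (g : MonoidAlgebra ℂ G) :
    l2norm (MonoidAlgebra.single γ c * g) = ‖c‖ * l2norm g := by
  classical
  rw [l2norm_eq_sqrt_sum_of_support_subset (MonoidAlgebra.support_coeff_single_mul_subset g c γ),
    Finset.sum_image fun x _ y _ h => mul_left_cancel h]
  simp only [MonoidAlgebra.coeff_single_mul_apply, inv_mul_cancel_left, norm_mul, mul_pow,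
    ← Finset.mul_sum]
  rw [Real.sqrt_mul (by positivity), Real.sqrt_sq (norm_nonneg c)]
  rfl

lemma l2norm_mul_le (f g : MonoidAlgebra ℂ G) :
    l2norm (f * g) ≤ (∑ γ ∈ f.coeff.support, ‖f.coeff γ‖) * l2norm g := by
  conv_lhs => rw [← MonoidAlgebra.sum_coeff_single f, Finsupp.sum, Finset.sum_mul]
  calc _ ≤ ∑ γ ∈ f.coeff.support, l2norm (MonoidAlgebra.single γ (f.coeff γ) * g) :=
        l2norm_sum_le _ _
    _ = _ := by simp only [l2norm_single_mul, Finset.sum_mul]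

lemma l2norm_mapDomain {H : Type*} [Group H] {φ : H → G} (hφ : Function.Injective φ)
    (f : MonoidAlgebra ℂ H) : l2norm (MonoidAlgebra.mapDomain φ f) = l2norm f := by
  classical
  rw [l2norm, MonoidAlgebra.coeff_mapDomain, Finsupp.mapDomain_support_of_injective hφ,
    Finset.sum_image hφ.injOn]
  simp only [Finsupp.mapDomain_apply hφ]
  rfl

end L2Norm

section OpNorm

variable {G : Type*} [Group G]

lemma bddAbove_l2norm_mul (f : MonoidAlgebra ℂ G) :
    BddAbove {c : ℝ | ∃ g : MonoidAlgebra ℂ G, l2norm g = 1 ∧ c = l2norm (f * g)} := by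
  refine ⟨∑ γ ∈ f.coeff.support, ‖f.coeff γ‖, ?_⟩
  rintro _ ⟨g, hg, rfl⟩
  simpa [hg] using l2norm_mul_le f g

lemma l2norm_mul_le_opNorm (f : MonoidAlgebra ℂ G) {g : MonoidAlgebra ℂ G} (hg : l2norm g = 1) :
    l2norm (f * g) ≤ opNorm f :=
  le_csSup (bddAbove_l2norm_mul f) ⟨g, hg, rfl⟩

lemma l2norm_one : l2norm (1 : MonoidAlgebra ℂ G) = 1 := by
  simp [l2norm, MonoidAlgebra.one_def]

lemma opNorm_nonneg (f : MonoidAlgebra ℂ G) : 0 ≤ opNorm f :=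
  (l2norm_nonneg _).trans (l2norm_mul_le_opNorm f l2norm_one)

lemma opNorm_le_opNorm_mapDomain {H : Type*} [Group H] (φ : H →* G)
    (hφ : Function.Injective φ) (f : MonoidAlgebra ℂ H) :
    opNorm f ≤ opNorm (MonoidAlgebra.mapDomain φ f) := by
  refine Real.sSup_le ?_ (opNorm_nonneg _)
  rintro _ ⟨g, hg, rfl⟩
  rw [← l2norm_mapDomain hφ, MonoidAlgebra.mapDomain_mul]
  exact l2norm_mul_le_opNorm _ (by rwa [l2norm_mapDomain hφ])

end OpNorm

lemma MonoidAlgebra.forall_coeff_mapDomain {R H G : Type*} [Semiring R] {φ : H → G}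
    (hφ : Function.Injective φ) {p : G → R → Prop} (hp : ∀ γ, p γ 0) (f : MonoidAlgebra R H)
    (hf : ∀ x, p (φ x) (f.coeff x)) (γ : G) : p γ ((MonoidAlgebra.mapDomain φ f).coeff γ) := by
  rw [MonoidAlgebra.coeff_mapDomain]
  by_cases hγ : γ ∈ Set.range φ
  · obtain ⟨x, rfl⟩ := hγ
    simpa [Finsupp.mapDomain_apply hφ] using hf x
  · simpa [Finsupp.mapDomain_of_notMem_range _ _ hγ] using hp γ

lemma IsLengthFunction.comp {G H : Type*} [Group G] [Group H] {ℓ : G → ℝ}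
    (hℓ : IsLengthFunction ℓ) (φ : H →* G) : IsLengthFunction (ℓ ∘ φ) := by
  obtain ⟨h_one, h_nonneg, h_inv, h_mul⟩ := hℓ
  exact ⟨by simp [h_one], fun _ => h_nonneg _, fun _ => by simp [h_inv],
    fun x y => by simpa using h_mul (φ x) (φ y)⟩

/-- If every nonnegative `f ∈ ℂG` supported in `B_ℓ(e,r)` satisfies
`‖f‖_{*,G} ≤ P(r)·‖f‖₂`, then for every subgroup `H ≤ G` the induced length is a
length function on `H` and every nonnegative `f ∈ ℂH` supported in
`{h ∈ H : ℓ(h) ≤ r}` satisfies `‖f‖_{*,H} ≤ P(r)·‖f‖₂`. -/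
theorem rd_passes_to_subgroups {G : Type*} [Group G] (ℓ : G → ℝ)
    (hℓ : IsLengthFunction ℓ) (P : Polynomial ℝ)
    (h : ∀ r : ℝ, 0 ≤ r → ∀ f : MonoidAlgebra ℂ G, (∀ γ : G, 0 ≤ f.coeff γ) →
      (∀ γ : G, f.coeff γ ≠ 0 → ℓ γ ≤ r) → opNorm f ≤ P.eval r * l2norm f) :
    ∀ H : Subgroup G,
      IsLengthFunction (fun x : H => ℓ (x : G)) ∧
      ∀ r : ℝ, 0 ≤ r → ∀ f : MonoidAlgebra ℂ H, (∀ x : H, 0 ≤ f.coeff x) →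
        (∀ x : H, f.coeff x ≠ 0 → ℓ (x : G) ≤ r) → opNorm f ≤ P.eval r * l2norm f := by
  intro H
  refine ⟨hℓ.comp H.subtype, fun r hr f hf_nonneg hf_supp => ?_⟩
  have hι := H.subtype_injective
  set F := MonoidAlgebra.mapDomain H.subtype f
  have hF_nonneg : ∀ γ, 0 ≤ F.coeff γ :=
    MonoidAlgebra.forall_coeff_mapDomain hι (fun _ => le_rfl) f hf_nonneg
  have hF_supp : ∀ γ, F.coeff γ ≠ 0 → ℓ γ ≤ r :=
    MonoidAlgebra.forall_coeff_mapDomain (p := fun γ (c : ℂ) => c ≠ 0 → ℓ γ ≤ r) hι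
      (fun _ h => absurd rfl h) f hf_supp
  calc opNorm f ≤ opNorm F := opNorm_le_opNorm_mapDomain H.subtype hι f
    _ ≤ P.eval r * l2norm F := h r hr F hF_nonneg hF_supp
    _ = P.eval r * l2norm f := by rw [l2norm_mapDomain hι]
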